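/- The twisted product of Schwartz functions on ℝ^{2N} is associative: for all complex-valued Schwartz functions f, g, h on ℝ^{2N}, ((f × g) × h)(u) = (f × (g × h))(u) for every u ∈ ℝ^{2N}. -/

import Mathlib

open MeasureTheory SchwartzMap Complex

noncomputable section

abbrev PS (N : ℕ) := EuclideanSpace ℝ (Fin N ⊕ Fin N)

def symp {N : ℕ} (u v : PS N) : ℝ :=
  ∑ i : Fin N, (u (Sum.inl i) * v (Sum.inr i) - u (Sum.inr i) * v (Sum.inl i))

def mes (N : ℕ) : Measure (PS N) :=
  (ENNReal.ofReal ((2 * Real.pi) ^ N))⁻¹ • (volume : Measure (PS N))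

def twProd {N : ℕ} (f g : PS N → ℂ) : PS N → ℂ := fun u =>
  ∫ s, ∫ t, f (u + s) * g (u + t) * Complex.exp (Complex.I * (symp s t : ℂ)) ∂(mes N) ∂(mes N)

/-! The symplectic Fourier transform `Φ χ (v) = ∫ χ(t) e^{iσ(v,t)} dt` turns the twisted product
into the twisted convolution `(φ ⋆ ψ)(x) = ∫ φ(x - a) ψ(a) e^{iσ(a,x)} da`. Translation invariance
alone gives `(F × G)(w) = ∫ F(w + a) e^{iσ(w,a)} Φ G(a) da`, and one exchange of integrals then
gives `Φ (g × h) = Φ g ⋆ Φ h`. Expanding `((f × g) × h)(u)` the same way and exchanging the two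
integrals once more yields `∫ f(u + x) e^{iσ(u,x)} (Φ g ⋆ Φ h)(x) dx = (f × (g × h))(u)`.
Fubini applies because `Φ g` is bounded and `Φ h` is integrable, the latter since `Φ h` is a
rescaled Euclidean Fourier transform of a Schwartz function. -/

open scoped FourierTransform RealInnerProductSpace

local notation "𝐞[" x "]" => Complex.exp (Complex.I * ((x : ℝ) : ℂ))

theorem expI_add (a b : ℝ) : 𝐞[a + b] = 𝐞[a] * 𝐞[b] := by
  rw [← Complex.exp_add]; push_cast; ring_nf

theorem expI_mul_expI_of_add_eq {a b c d : ℝ} (h : a + b = c + d) :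
    𝐞[a] * 𝐞[b] = 𝐞[c] * 𝐞[d] := by
  rw [← expI_add, ← expI_add, h]

theorem MeasureTheory.Integrable.comp_add_mul_prod {G L : Type*} [AddGroup G] [MeasurableSpace G]
    [MeasurableAdd₂ G] [NormedRing L] {μ : Measure G} [SFinite μ] [μ.IsAddRightInvariant]
    {φ ψ : G → L} (hφ : Integrable φ μ) (hψ : Integrable ψ μ) :
    Integrable (fun p : G × G => φ (p.1 + p.2) * ψ p.2) (μ.prod μ) :=
  ((measurePreserving_add_prod μ μ).integrable_comp (hφ.mul_prod hψ).aestronglyMeasurable).2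
    (hφ.mul_prod hψ)

variable {N : ℕ}

theorem symp_add_left (a b c : PS N) : symp (a + b) c = symp a c + symp b c := by
  simp only [symp, PiLp.add_apply, ← Finset.sum_add_distrib]
  exact Finset.sum_congr rfl fun i _ => by ring

theorem symp_add_right (a b c : PS N) : symp a (b + c) = symp a b + symp a c := by
  simp only [symp, PiLp.add_apply, ← Finset.sum_add_distrib]
  exact Finset.sum_congr rfl fun i _ => by ring

theorem symp_sub_left (a b c : PS N) : symp (a - b) c = symp a c - symp b c := by
  simp only [symp, PiLp.sub_apply, ← Finset.sum_sub_distrib]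
  exact Finset.sum_congr rfl fun i _ => by ring

theorem symp_sub_right (a b c : PS N) : symp a (b - c) = symp a b - symp a c := by
  simp only [symp, PiLp.sub_apply, ← Finset.sum_sub_distrib]
  exact Finset.sum_congr rfl fun i _ => by ring

theorem symp_self (a : PS N) : symp a a = 0 :=
  Finset.sum_eq_zero fun i _ => by ring

theorem symp_swap (a b : PS N) : symp b a = -symp a b := by
  simp only [symp, ← Finset.sum_neg_distrib]
  exact Finset.sum_congr rfl fun i _ => by ring

@[fun_prop]
theorem Continuous.symp {α : Type*} [TopologicalSpace α] {φ ψ : α → PS N}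
    (hφ : Continuous φ) (hψ : Continuous ψ) : Continuous fun x => _root_.symp (φ x) (ψ x) := by
  unfold _root_.symp; fun_prop

-- The rotation `(q, p) ↦ (-p, q)`.
def sympJ (N : ℕ) : PS N ≃ₗᵢ[ℝ] PS N :=
  (LinearIsometryEquiv.piLpCongrLeft 2 ℝ ℝ (Equiv.sumComm (Fin N) (Fin N))).trans
    (LinearIsometryEquiv.piLpCongrRight 2 fun j =>
      Sum.elim (fun _ => LinearIsometryEquiv.neg ℝ) (fun _ => LinearIsometryEquiv.refl ℝ ℝ) j)

theorem symp_eq_inner (v t : PS N) : symp v t = ⟪sympJ N v, t⟫ := by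
  simp [sympJ, symp, PiLp.inner_apply, Fintype.sum_sum_type, Finset.sum_sub_distrib,
    mul_comm (t.ofLp _)]
  ring

instance : SFinite (mes N) := by unfold mes; infer_instance

instance : (mes N).IsAddLeftInvariant := by unfold mes; infer_instance

instance : (mes N).IsAddRightInvariant := by unfold mes; infer_instance

theorem integrable_mes_iff {φ : PS N → ℂ} : Integrable φ (mes N) ↔ Integrable φ := by
  refine integrable_smul_measure ?_ ?_ <;> simp [Real.pi_pos]

theorem integral_mes (φ : PS N → ℂ) :
    ∫ x, φ x ∂mes N = ((2 * Real.pi) ^ N)⁻¹ • ∫ x, φ x := by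
  rw [mes, integral_smul_measure, ENNReal.toReal_inv, ENNReal.toReal_ofReal (by positivity)]

def sympFourier (χ : PS N → ℂ) (v : PS N) : ℂ :=
  ∫ t, χ t * 𝐞[symp v t] ∂mes N

theorem norm_sympFourier_le (χ : PS N → ℂ) (v : PS N) :
    ‖sympFourier χ v‖ ≤ ∫ t, ‖χ t‖ ∂mes N :=
  (norm_integral_le_integral_norm _).trans_eq <| by
    simp only [norm_mul, Complex.norm_exp_I_mul_ofReal, mul_one]

theorem continuous_sympFourier {χ : PS N → ℂ} (hχ : Integrable χ (mes N)) :
    Continuous (sympFourier χ) := by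
  refine continuous_of_dominated (bound := fun t => ‖χ t‖)
    (fun v => hχ.aestronglyMeasurable.mul (by fun_prop : Continuous _).aestronglyMeasurable)
    (fun v => .of_forall fun t => ?_) hχ.norm (.of_forall fun t => by fun_prop)
  simp only [norm_mul, Complex.norm_exp_I_mul_ofReal, mul_one, le_refl]

theorem sympFourier_eq_fourier (χ : PS N → ℂ) (v : PS N) :
    sympFourier χ v = ((2 * Real.pi) ^ N)⁻¹ • 𝓕 χ ((-(2 * Real.pi)⁻¹ : ℝ) • sympJ N v) := by
  rw [sympFourier, integral_mes, Real.fourier_eq']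
  congr 2 with t
  rw [smul_eq_mul, mul_comm, real_inner_smul_right, real_inner_comm, ← symp_eq_inner]
  congr 2
  push_cast
  field_simp

theorem integrable_sympFourier (χ : 𝓢(PS N, ℂ)) : Integrable (sympFourier χ) (mes N) := by
  have h2π : (-(2 * Real.pi)⁻¹ : ℝ) ≠ 0 := by simp [Real.pi_ne_zero]
  have hF : Integrable fun w => 𝓕 χ ((-(2 * Real.pi)⁻¹ : ℝ) • w) :=
    (𝓕 χ).integrable.comp_smul h2π
  rw [integrable_mes_iff, funext (sympFourier_eq_fourier χ), ← fourier_coe]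
  exact ((integrable_comp (sympJ N) _).2 hF).smul (((2 * Real.pi) ^ N)⁻¹ : ℝ)

theorem twProd_eq_integral_sympFourier (F G : PS N → ℂ) (w : PS N) :
    twProd F G w = ∫ a, F (w + a) * 𝐞[symp w a] * sympFourier G a ∂mes N := by
  refine integral_congr_ae (.of_forall fun a => ?_)
  have phase (t : PS N) : symp w a + symp a (w + t) = symp a t := by
    rw [symp_add_right, symp_swap w a]; ring
  simp only [sympFourier, ← integral_const_mul,
    ← integral_add_left_eq_self (fun t => G t * 𝐞[symp a t]) w]
  congr 1 with t
  rw [← phase, expI_add]; ring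

def twConv (φ ψ : PS N → ℂ) (x : PS N) : ℂ :=
  ∫ a, φ (x - a) * ψ a * 𝐞[symp a x] ∂mes N

theorem sympFourier_twProd {g h : PS N → ℂ} (hg : Integrable g (mes N))
    (hh : Integrable (sympFourier h) (mes N)) :
    sympFourier (twProd g h) = twConv (sympFourier g) (sympFourier h) := by
  ext s
  set F : PS N → PS N → ℂ := fun t a =>
    g (t + a) * 𝐞[symp t a] * sympFourier h a * 𝐞[symp s t]
  have hF_int : Integrable (Function.uncurry F) ((mes N).prod (mes N)) := by
    have hphase : Continuous fun p : PS N × PS N => 𝐞[symp p.1 p.2] * 𝐞[symp s p.1] := by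
      fun_prop
    refine ((hg.comp_add_mul_prod hh).bdd_mul (c := 1) hphase.aestronglyMeasurable
      (.of_forall fun p => ?_)).congr (.of_forall fun p => ?_)
    · simp [Complex.norm_exp_I_mul_ofReal]
    · simp only [F, Function.uncurry]; ring
  have inner (a : PS N) :
      ∫ t, F t a ∂mes N = sympFourier g (s - a) * sympFourier h a * 𝐞[symp a s] := by
    have phase (t : PS N) : symp (t - a) a + symp s (t - a) = symp (s - a) t + symp a s := by
      rw [symp_sub_left, symp_sub_right, symp_sub_left, symp_self, symp_swap a s, symp_swap a t]
      ring
    rw [← integral_sub_right_eq_self (F · a) a, mul_assoc, sympFourier, ← integral_mul_const]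
    congr 1 with t
    simp only [F, sub_add_cancel]
    linear_combination (g t * sympFourier h a) * expI_mul_expI_of_add_eq (phase t)
  calc sympFourier (twProd g h) s = ∫ t, ∫ a, F t a ∂mes N ∂mes N := by
        simp only [sympFourier, twProd_eq_integral_sympFourier, ← integral_mul_const, F]
    _ = ∫ a, ∫ t, F t a ∂mes N ∂mes N := integral_integral_swap hF_int
    _ = _ := by simp only [inner, twConv]

theorem twProd_twProd_eq_integral_twConv {f g h : PS N → ℂ} (hf : Integrable f (mes N))
    (hg : Integrable g (mes N)) (hh : Integrable (sympFourier h) (mes N)) (u : PS N) :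
    twProd (twProd f g) h u =
      ∫ x, f (u + x) * 𝐞[symp u x] * twConv (sympFourier g) (sympFourier h) x ∂mes N := by
  set F : PS N → PS N → ℂ := fun s x =>
    f (u + x) * 𝐞[symp (u + s) (x - s)] * sympFourier g (x - s) * (𝐞[symp u s] * sympFourier h s)
  have hF_int : Integrable (Function.uncurry F) ((mes N).prod (mes N)) := by
    have hΦg := continuous_sympFourier hg
    have hbdd : Continuous fun p : PS N × PS N =>
        𝐞[symp (u + p.1) (p.2 - p.1)] * 𝐞[symp u p.1] * sympFourier g (p.2 - p.1) := by
      fun_prop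
    refine ((hh.mul_prod (hf.comp_add_left u)).bdd_mul (c := ∫ t, ‖g t‖ ∂mes N)
      hbdd.aestronglyMeasurable (.of_forall fun p => ?_)).congr (.of_forall fun p => ?_)
    · simpa [Complex.norm_exp_I_mul_ofReal] using norm_sympFourier_le g (p.2 - p.1)
    · simp only [F, Function.uncurry]; ring
  have inner (s : PS N) :
      twProd f g (u + s) * 𝐞[symp u s] * sympFourier h s = ∫ x, F s x ∂mes N := by
    rw [twProd_eq_integral_sympFourier, mul_assoc, ← integral_mul_const,
      ← integral_sub_right_eq_self _ s]
    congr 1 with x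
    simp only [F, add_add_sub_cancel]
  have outer (x : PS N) :
      ∫ s, F s x ∂mes N = f (u + x) * 𝐞[symp u x] * twConv (sympFourier g) (sympFourier h) x := by
    have phase (s : PS N) : symp (u + s) (x - s) + symp u s = symp u x + symp s x := by
      rw [symp_add_left, symp_sub_right, symp_sub_right, symp_self]; ring
    rw [twConv, ← integral_const_mul]
    congr 1 with s
    linear_combination (f (u + x) * sympFourier g (x - s) * sympFourier h s) *
      expI_mul_expI_of_add_eq (phase s)
  calc twProd (twProd f g) h u = ∫ s, ∫ x, F s x ∂mes N ∂mes N := by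
        simp only [twProd_eq_integral_sympFourier (twProd f g), inner]
    _ = ∫ x, ∫ s, F s x ∂mes N ∂mes N := integral_integral_swap hF_int
    _ = _ := by simp only [outer]

theorem twProd_assoc_of_integrable {f g h : PS N → ℂ} (hf : Integrable f (mes N))
    (hg : Integrable g (mes N)) (hh : Integrable (sympFourier h) (mes N)) :
    twProd (twProd f g) h = twProd f (twProd g h) := by
  ext u
  rw [twProd_twProd_eq_integral_twConv hf hg hh, twProd_eq_integral_sympFourier,
    sympFourier_twProd hg hh]

theorem twProd_assoc_general (N : ℕ) (f g h : SchwartzMap (PS N) ℂ) (u : PS N) :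
    twProd (twProd (⇑f) (⇑g)) (⇑h) u = twProd (⇑f) (twProd (⇑g) (⇑h)) u :=
  congrFun (twProd_assoc_of_integrable (integrable_mes_iff.2 f.integrable)
    (integrable_mes_iff.2 g.integrable) (integrable_sympFourier h)) u

theorem twProd_assoc (N : ℕ) (hN : 0 < N)
    (f g h : SchwartzMap (PS N) ℂ) (u : PS N) :
    twProd (twProd (⇑f) (⇑g)) (⇑h) u = twProd (⇑f) (twProd (⇑g) (⇑h)) u :=
  twProd_assoc_general N f g h u
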